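/- arXiv:1703.00469 — 2 statements merged into one kernel-verified Lean document; each statement's English description precedes it below -/
import Mathlib

section
/- In the error-in-variables model with diagonal measurement-error covariance Γ (so Γ_{j,-j} = 0), if μ₀ʲ satisfies the population orthogonality E[(x_j − x_{-j}ᵀμ₀ʲ)x_{-j}] = 0, then E[z_{-j}(z_j − z_{-j}ᵀμ₀ʲ)] = Γ_{j,-j} − Γ_{-j,-j}μ₀ʲ; consequently the corrected moment condition E[z_{-j}(z_j − z_{-j}ᵀμ₀ʲ) + Γ_{-j,-j}μ₀ʲ] = 0 holds, i.e., the auxiliary regression of z_j on z_{-j} is itself a high-dimensional linear model with error-in-variables of the same form. -/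
open MeasureTheory ProbabilityTheory Finset Filter

noncomputable section

namespace EIV

/-- ℓ₂ norm of a finite vector. -/
def l2 {m : ℕ} (v : Fin m → ℝ) : ℝ := Real.sqrt (∑ k, v k ^ 2)

/-- ℓ₁ norm of a finite vector. -/
def l1 {m : ℕ} (v : Fin m → ℝ) : ℝ := ∑ k, |v k|

/-- ℓ₀ "norm" (number of nonzero coordinates). -/
def l0 {m : ℕ} (v : Fin m → ℝ) : ℕ := (Function.support v).ncard

/-- A real random variable is subgaussian with variance parameter `γ2`. -/
def SubG {Ω : Type} [MeasurableSpace Ω] (μ : Measure Ω) (f : Ω → ℝ) (γ2 : ℝ) : Prop :=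
  ∀ t : ℝ, ∫ ω, Real.exp (t * f ω) ∂μ ≤ Real.exp (γ2 * t ^ 2 / 2)

/-- A random vector is subgaussian with variance parameter `γ2`. -/
def SubGVec {Ω : Type} [MeasurableSpace Ω] {p : ℕ} (μ : Measure Ω)
    (f : Ω → Fin p → ℝ) (γ2 : ℝ) : Prop :=
  ∀ v : Fin p → ℝ, (∑ k, v k ^ 2) = 1 → SubG μ (fun ω => ∑ k, v k * f ω k) γ2

/-- Response variable `y = xᵀβ₀ + ξ`. -/
def yval {Ω : Type} {p : ℕ} (x : Ω → Fin p → ℝ) (ξ : Ω → ℝ) (β₀ : Fin p → ℝ) (ω : Ω) : ℝ :=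
  (∑ j, x ω j * β₀ j) + ξ ω

/-- Observed covariates `z = x + w`. -/
def zval {Ω : Type} {p : ℕ} (x w : Ω → Fin p → ℝ) (ω : Ω) (j : Fin p) : ℝ := x ω j + w ω j

/-- Diagonal of the covariance matrix `Γ = cov(w)` (which is assumed diagonal). -/
def Γv {Ω : Type} [MeasurableSpace Ω] {p : ℕ} (μ : Measure Ω) (w : Ω → Fin p → ℝ)
    (j : Fin p) : ℝ := ∫ ω, (w ω j) ^ 2 ∂μ

/-- The orthogonal score function
`ψ_j(y,z,θ,ηʲ) = (eʲ−μʲ)ᵀ{z(y − z_jθ − z_{-j}ᵀβ_{-j}) + Γ(θeʲ + β_{-j})}`,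
where `Γ` is diagonal (represented by the vector of its diagonal entries). -/
def score {p : ℕ} (Γ : Fin p → ℝ) (j : Fin p) (yy : ℝ) (zz : Fin p → ℝ)
    (θ : ℝ) (β μv : Fin p → ℝ) : ℝ :=
  ∑ k, ((if k = j then (1 : ℝ) else 0) - μv k) *
    (zz k * (yy - zz j * θ - ∑ l ∈ Finset.univ.erase j, zz l * β l)
      + Γ k * (if k = j then θ else β k))

/-- `Σ_j = E[(z_j − z_{-j}ᵀμ₀ʲ)z_j] − Γ_{jj}`. -/
def Sigpop {Ω : Type} [MeasurableSpace Ω] {p : ℕ} (μ : Measure Ω)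
    (x w : Ω → Fin p → ℝ) (μ₀ : Fin p → Fin p → ℝ) (j : Fin p) : ℝ :=
  (∫ ω, (zval x w ω j - ∑ k ∈ Finset.univ.erase j, zval x w ω k * μ₀ j k) * zval x w ω j ∂μ)
    - Γv μ w j

/-- `σ_j = Σ_j⁻¹ (E[ψ_j²(y,z,β₀ⱼ,η₀ʲ)])^{1/2}`. -/
def sigpop {Ω : Type} [MeasurableSpace Ω] {p : ℕ} (μ : Measure Ω)
    (x w : Ω → Fin p → ℝ) (ξ : Ω → ℝ) (β₀ : Fin p → ℝ) (μ₀ : Fin p → Fin p → ℝ)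
    (j : Fin p) : ℝ :=
  (Sigpop μ x w μ₀ j)⁻¹ *
    Real.sqrt (∫ ω, (score (Γv μ w) j (yval x ξ β₀ ω) (zval x w ω) (β₀ j) β₀ (μ₀ j)) ^ 2 ∂μ)

/-- `ψ̄_j(y,z) = −σ_j⁻¹Σ_j⁻¹ψ_j(y,z,β₀ⱼ,η₀ʲ)`. -/
def ψbar {Ω : Type} [MeasurableSpace Ω] {p : ℕ} (μ : Measure Ω)
    (x w : Ω → Fin p → ℝ) (ξ : Ω → ℝ) (β₀ : Fin p → ℝ) (μ₀ : Fin p → Fin p → ℝ)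
    (j : Fin p) (ω : Ω) : ℝ :=
  -((sigpop μ x w ξ β₀ μ₀ j)⁻¹ * (Sigpop μ x w μ₀ j)⁻¹ *
    score (Γv μ w) j (yval x ξ β₀ ω) (zval x w ω) (β₀ j) β₀ (μ₀ j))

/-- `Σ̂_j = n⁻¹ Σᵢ (z_{ij} − z_{i,-j}ᵀμ̂ʲ) z_{ij} − Γ̂_{jj}`, on the sample `d` of size `n`;
`Γe` is the (possibly estimated) diagonal of `Γ`. -/
def Sighat {Ω : Type} {p n : ℕ} (x w : Ω → Fin p → ℝ)
    (Γe : (Fin n → Ω) → Fin p → ℝ) (μhat : Fin p → (Fin n → Ω) → Fin p → ℝ)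
    (j : Fin p) (d : Fin n → Ω) : ℝ :=
  (n : ℝ)⁻¹ * (∑ i, (zval x w (d i) j
      - ∑ k ∈ Finset.univ.erase j, zval x w (d i) k * μhat j d k) * zval x w (d i) j)
    - Γe d j

/-- The orthogonal-score estimator `β̌_j` (Algorithm 1 when `Γe` is the true `Γ`,
Algorithm 2 when `Γe` is an estimator `Γ̂`). -/
def βcheck {Ω : Type} {p n : ℕ} (x w : Ω → Fin p → ℝ) (ξ : Ω → ℝ) (β₀ : Fin p → ℝ)
    (Γe : (Fin n → Ω) → Fin p → ℝ) (βhat : (Fin n → Ω) → Fin p → ℝ)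
    (μhat : Fin p → (Fin n → Ω) → Fin p → ℝ) (j : Fin p) (d : Fin n → Ω) : ℝ :=
  (Sighat x w Γe μhat j d)⁻¹ *
    ((n : ℝ)⁻¹ * (∑ i, (zval x w (d i) j
          - ∑ k ∈ Finset.univ.erase j, zval x w (d i) k * μhat j d k)
        * (yval x ξ β₀ (d i) - ∑ k ∈ Finset.univ.erase j, zval x w (d i) k * βhat d k))
      - ∑ k ∈ Finset.univ.erase j, μhat j d k * Γe d k * βhat d k)

/-- Plug-in estimator `σ̂_j = Σ̂_j⁻¹ {n⁻¹Σᵢ ψ_j²(y_i,z_i,β̂_j,η̂ʲ)}^{1/2}`. -/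
def sighat {Ω : Type} {p n : ℕ} (x w : Ω → Fin p → ℝ) (ξ : Ω → ℝ) (β₀ : Fin p → ℝ)
    (Γe : (Fin n → Ω) → Fin p → ℝ) (βhat : (Fin n → Ω) → Fin p → ℝ)
    (μhat : Fin p → (Fin n → Ω) → Fin p → ℝ) (j : Fin p) (d : Fin n → Ω) : ℝ :=
  (Sighat x w Γe μhat j d)⁻¹ *
    Real.sqrt ((n : ℝ)⁻¹ * ∑ i, (score (Γe d) j (yval x ξ β₀ (d i)) (zval x w (d i))
        (βhat d j) (βhat d) (μhat j d)) ^ 2)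

/-- Condition A of the paper. -/
def CondA {Ω : Type} [MeasurableSpace Ω] {p : ℕ} (μ : Measure Ω)
    (x w : Ω → Fin p → ℝ) (ξ : Ω → ℝ) (c C : ℝ) : Prop :=
  Measurable x ∧ Measurable w ∧ Measurable ξ ∧
  (∃ σx2, 0 ≤ σx2 ∧ σx2 ≤ C ∧ SubGVec μ x σx2) ∧
  (∀ j, ∫ ω, x ω j ∂μ = 0) ∧
  (∀ v : Fin p → ℝ,
      c * (∑ k, v k ^ 2) ≤ ∑ j, ∑ k, v j * v k * ∫ ω, x ω j * x ω k ∂μ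
      ∧ (∑ j, ∑ k, v j * v k * ∫ ω, x ω j * x ω k ∂μ) ≤ C * (∑ k, v k ^ 2)) ∧
  (∃ σξ2, 0 ≤ σξ2 ∧ σξ2 ≤ C ∧ SubG μ ξ σξ2) ∧ (∫ ω, ξ ω ∂μ = 0) ∧
  IndepFun (fun ω => (x ω, w ω)) ξ μ ∧
  (∃ σw2, 0 ≤ σw2 ∧ σw2 ≤ C ∧ SubGVec μ w σw2) ∧
  (∀ j, ∫ ω, w ω j ∂μ = 0) ∧
  (∀ j k, ∫ ω, x ω j * w ω k ∂μ = 0) ∧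
  (∀ j k, j ≠ k → ∫ ω, w ω j * w ω k ∂μ = 0)

/-- `μ₀ʲ` is the population regression coefficient of `x_j` on `x_{-j}`
(represented as a `p`-vector whose `j`-th entry is zero). -/
def Mu0Spec {Ω : Type} [MeasurableSpace Ω] {p : ℕ} (μ : Measure Ω)
    (x : Ω → Fin p → ℝ) (μ₀ : Fin p → Fin p → ℝ) : Prop :=
  ∀ j, μ₀ j j = 0 ∧ ∀ k, k ≠ j →
    ∫ ω, (x ω j - ∑ l ∈ Finset.univ.erase j, x ω l * μ₀ j l) * x ω k ∂μ = 0

/-- Condition B of the paper: sparsity and rates of the preliminary estimators. -/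
def CondB {Ω : Type} [MeasurableSpace Ω] {p n : ℕ} (μ : Measure Ω)
    [IsProbabilityMeasure μ] (β₀ : Fin p → ℝ) (μ₀ : Fin p → Fin p → ℝ)
    (βhat : (Fin n → Ω) → Fin p → ℝ) (μhat : Fin p → (Fin n → Ω) → Fin p → ℝ)
    (S : Finset (Fin p)) (s : ℕ) (C Δn : ℝ) : Prop :=
  2 ≤ S.card ∧ 1 ≤ s ∧ l0 β₀ ≤ s ∧ (∀ j ∈ S, l0 (μ₀ j) ≤ s) ∧
  ENNReal.ofReal (1 - Δn) ≤
    (Measure.pi fun _ : Fin n => μ) {d |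
      (l1 (fun k => βhat d k - β₀ k) ≤ C * (1 + l2 β₀) * s * Real.sqrt (Real.log p / n)
        ∧ l2 (fun k => βhat d k - β₀ k)
            ≤ C * (1 + l2 β₀) * Real.sqrt s * Real.sqrt (Real.log p / n)
        ∧ (l0 (βhat d) : ℝ) ≤ C * s)
      ∧ ∀ j ∈ S,
        (l1 (fun k => μhat j d k - μ₀ j k)
            ≤ C * (1 + l2 (μ₀ j)) * s * Real.sqrt (Real.log p / n)
          ∧ l2 (fun k => μhat j d k - μ₀ j k)
              ≤ C * (1 + l2 (μ₀ j)) * Real.sqrt s * Real.sqrt (Real.log p / n)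
          ∧ (l0 (μhat j d) : ℝ) ≤ C * s)}

/-- Condition C of the paper: growth restrictions. -/
def CondC {p : ℕ} (n : ℕ) (β₀ : Fin p → ℝ) (μ₀ : Fin p → Fin p → ℝ)
    (S : Finset (Fin p)) (s : ℕ) (C δn : ℝ) : Prop :=
  (∀ j, |β₀ j| ≤ C) ∧
  ∃ m : ℝ, (∀ j ∈ S, l2 (μ₀ j) ≤ m) ∧
    (1 + l2 β₀) * (1 + m) * s * Real.log ((n : ℝ) * p) ≤ δn * Real.sqrt n


/-! Since `E[x wᵀ] = 0`, the second moments of `z = x + w` are those of `x` plus `Γ`.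
Pairing `z_k` with the residual `z_j − z_{-j}ᵀμ₀ʲ` is linear in these moments, and the part
coming from `x` is the orthogonality condition defining `μ₀ʲ`, so only the `Γ` part survives. -/

theorem integral_mul_sub_sum_mul {Ω ι : Type*} [MeasurableSpace Ω] {μ : Measure Ω}
    {f g : Ω → ℝ} {v : Ω → ι → ℝ} (s : Finset ι) (c : ι → ℝ)
    (hfg : Integrable (fun ω => f ω * g ω) μ)
    (hfv : ∀ l ∈ s, Integrable (fun ω => f ω * v ω l) μ) :
    ∫ ω, f ω * (g ω - ∑ l ∈ s, v ω l * c l) ∂μ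
      = ∫ ω, f ω * g ω ∂μ - ∑ l ∈ s, (∫ ω, f ω * v ω l ∂μ) * c l := by
  have hexpand : ∀ ω, f ω * (g ω - ∑ l ∈ s, v ω l * c l)
      = f ω * g ω - ∑ l ∈ s, f ω * v ω l * c l := by
    intro ω
    simp only [mul_sub, mul_sum, mul_assoc]
  have hsum := fun l hl => (hfv l hl).mul_const (c l)
  simp only [hexpand]
  rw [integral_sub hfg (integrable_finsetSum s hsum), integral_finsetSum s hsum]
  simp only [integral_mul_const]

theorem zval_mul_zval {Ω : Type} {p : ℕ} (x w : Ω → Fin p → ℝ) (ω : Ω) (k l : Fin p) :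
    zval x w ω k * zval x w ω l
      = x ω k * x ω l + x ω k * w ω l + x ω l * w ω k + w ω k * w ω l := by
  simp only [zval]
  ring

section SecondMoments

variable {Ω : Type} [MeasurableSpace Ω] {μ : Measure Ω} {p : ℕ} {x w : Ω → Fin p → ℝ}

theorem integrable_zval_mul_zval
    (hix : ∀ k l, Integrable (fun ω => x ω k * x ω l) μ)
    (hixw : ∀ k l, Integrable (fun ω => x ω k * w ω l) μ)
    (hiw : ∀ k l, Integrable (fun ω => w ω k * w ω l) μ) (k l : Fin p) :
    Integrable (fun ω => zval x w ω k * zval x w ω l) μ := by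
  simp only [zval_mul_zval x w]
  exact (((hix k l).add (hixw k l)).add (hixw l k)).add (hiw k l)

theorem integral_zval_mul_zval
    (hix : ∀ k l, Integrable (fun ω => x ω k * x ω l) μ)
    (hixw : ∀ k l, Integrable (fun ω => x ω k * w ω l) μ)
    (hiw : ∀ k l, Integrable (fun ω => w ω k * w ω l) μ)
    (hxw : ∀ k l, ∫ ω, x ω k * w ω l ∂μ = 0) (k l : Fin p) :
    ∫ ω, zval x w ω k * zval x w ω l ∂μ
      = ∫ ω, x ω k * x ω l ∂μ + ∫ ω, w ω k * w ω l ∂μ := by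
  simp only [zval_mul_zval x w]
  have hxx_xw : Integrable (fun ω => x ω k * x ω l + x ω k * w ω l) μ :=
    (hix k l).add (hixw k l)
  have hxx_xw_wx : Integrable (fun ω => x ω k * x ω l + x ω k * w ω l + x ω l * w ω k) μ :=
    hxx_xw.add (hixw l k)
  rw [integral_add hxx_xw_wx (hiw k l), integral_add hxx_xw (hixw l k),
    integral_add (hix k l) (hixw k l), hxw, hxw, add_zero, add_zero]

end SecondMoments

theorem auxiliary_regression_eiv_general
    {Ω : Type} [MeasurableSpace Ω] (μ : Measure Ω)
    {p : ℕ} (x w : Ω → Fin p → ℝ) (Γm : Matrix (Fin p) (Fin p) ℝ)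
    (j : Fin p) (μ₀ : Fin p → ℝ)
    -- integrability of all second moments involved
    (hix : ∀ k l, Integrable (fun ω => x ω k * x ω l) μ)
    (hixw : ∀ k l, Integrable (fun ω => x ω k * w ω l) μ)
    (hiw : ∀ k l, Integrable (fun ω => w ω k * w ω l) μ)
    -- zero-mean measurement error, orthogonal to the signal
    (hxw : ∀ k l, ∫ ω, x ω k * w ω l ∂μ = 0)
    -- Γ = E[wwᵀ], diagonal
    (hΓ : ∀ k l, Γm k l = ∫ ω, w ω k * w ω l ∂μ)
    (hdiag : ∀ k l, k ≠ l → Γm k l = 0)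
    -- μ₀ʲ is the population regression coefficient of x_j on x_{-j}
    (horth : ∀ k, k ≠ j →
      ∫ ω, (x ω j - ∑ l ∈ Finset.univ.erase j, x ω l * μ₀ l) * x ω k ∂μ = 0) :
    ∀ k, k ≠ j →
      ((∫ ω, zval x w ω k *
          (zval x w ω j - ∑ l ∈ Finset.univ.erase j, zval x w ω l * μ₀ l) ∂μ)
        = Γm k j - ∑ l ∈ Finset.univ.erase j, Γm k l * μ₀ l)
      ∧ ((∫ ω, zval x w ω k *
            (zval x w ω j - ∑ l ∈ Finset.univ.erase j, zval x w ω l * μ₀ l) ∂μ)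
          + ∑ l ∈ Finset.univ.erase j, Γm k l * μ₀ l = 0) := by
  intro k hk
  have hzz := integrable_zval_mul_zval hix hixw hiw k
  have hsignal : ∫ ω, x ω k * x ω j ∂μ
      - ∑ l ∈ univ.erase j, (∫ ω, x ω k * x ω l ∂μ) * μ₀ l = 0 := by
    rw [← integral_mul_sub_sum_mul _ _ (hix k j) fun l _ => hix k l, ← horth k hk]
    simp only [mul_comm (x _ k)]
  have hcov : ∫ ω, zval x w ω k *
      (zval x w ω j - ∑ l ∈ univ.erase j, zval x w ω l * μ₀ l) ∂μ
        = Γm k j - ∑ l ∈ univ.erase j, Γm k l * μ₀ l := by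
    rw [integral_mul_sub_sum_mul _ _ (hzz j) fun l _ => hzz l]
    simp only [integral_zval_mul_zval hix hixw hiw hxw, ← hΓ, add_mul, sum_add_distrib]
    linear_combination hsignal
  exact ⟨hcov, by rw [hcov, hdiag k j hk, zero_sub, neg_add_cancel]⟩

/-- **The auxiliary regression is itself an error-in-variables model.**
In the error-in-variables model `z = x + w` with `w` zero mean, `E[x_j w_k] = 0` for
all `j,k`, and `Γ = E[wwᵀ]` diagonal (so `Γ_{j,-j} = 0`), if `μ₀ʲ` satisfies the
population orthogonality `E[(x_j − x_{-j}ᵀμ₀ʲ)x_{-j}] = 0`, then coordinatewise on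
`k ≠ j`:
`E[z_{-j}(z_j − z_{-j}ᵀμ₀ʲ)] = Γ_{j,-j} − Γ_{-j,-j}μ₀ʲ`, and consequently the
corrected moment condition `E[z_{-j}(z_j − z_{-j}ᵀμ₀ʲ) + Γ_{-j,-j}μ₀ʲ] = 0` holds. -/
theorem auxiliary_regression_eiv
    {Ω : Type} [MeasurableSpace Ω] (μ : Measure Ω) [IsProbabilityMeasure μ]
    {p : ℕ} (x w : Ω → Fin p → ℝ) (Γm : Matrix (Fin p) (Fin p) ℝ)
    (j : Fin p) (μ₀ : Fin p → ℝ)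
    -- integrability of all second moments involved
    (hix : ∀ k l, Integrable (fun ω => x ω k * x ω l) μ)
    (hixw : ∀ k l, Integrable (fun ω => x ω k * w ω l) μ)
    (hiw : ∀ k l, Integrable (fun ω => w ω k * w ω l) μ)
    -- zero-mean measurement error, orthogonal to the signal
    (hw0 : ∀ k, ∫ ω, w ω k ∂μ = 0)
    (hxw : ∀ k l, ∫ ω, x ω k * w ω l ∂μ = 0)
    -- Γ = E[wwᵀ], diagonal
    (hΓ : ∀ k l, Γm k l = ∫ ω, w ω k * w ω l ∂μ)
    (hdiag : ∀ k l, k ≠ l → Γm k l = 0)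
    -- μ₀ʲ is the population regression coefficient of x_j on x_{-j}
    (hμj : μ₀ j = 0)
    (horth : ∀ k, k ≠ j →
      ∫ ω, (x ω j - ∑ l ∈ Finset.univ.erase j, x ω l * μ₀ l) * x ω k ∂μ = 0) :
    ∀ k, k ≠ j →
      ((∫ ω, zval x w ω k *
          (zval x w ω j - ∑ l ∈ Finset.univ.erase j, zval x w ω l * μ₀ l) ∂μ)
        = Γm k j - ∑ l ∈ Finset.univ.erase j, Γm k l * μ₀ l)
      ∧ ((∫ ω, zval x w ω k *
            (zval x w ω j - ∑ l ∈ Finset.univ.erase j, zval x w ω l * μ₀ l) ∂μ)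
          + ∑ l ∈ Finset.univ.erase j, Γm k l * μ₀ l = 0) :=
  auxiliary_regression_eiv_general μ x w Γm j μ₀ hix hixw hiw hxw hΓ hdiag horth
end EIV
end
end

section
/- Let X_i, i = 1,…,n, be independent random vectors in ℝᵖ with p ≥ 3, define m̄_k := max_{j≤p} (1/n)Σ_{i=1}^n E[|X_{ij}|^k] and let M_k ≥ E[max_{i≤n} ‖X_i‖_∞^k]. Then there is a universal constant C such that: (1) E[max_{j≤p} (1/n)|Σ_{i=1}^n (|X_{ij}|^k − E[|X_{ij}|^k])|] ≤ 2C²(log p / n)M_k + 2C√(log p / n) M_k^{1/2} m̄_k^{1/2}; and (2) E[max_{j≤p} (1/n)Σ_{i=1}^n |X_{ij}|^k] ≤ C M_k n⁻¹ log p + C m̄_k. -/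
open MeasureTheory ProbabilityTheory Finset Filter

noncomputable section

/-!
Put `A i ω j = |X i ω j| ^ k`, `Yᵢ = maxⱼ A i · j` and `Z = maxᵢ Yᵢ`, and truncate every
`A i · j` at a level `u > 2 E Z`. The centred truncated summands are bounded by `u` and have
variance at most `u E A i · j`, so a Bernstein-type bound on their moment generating function
and a union bound over the `p` coordinates give
`E maxⱼ |∑ᵢ (truncated - mean)| ≲ √(log p · u · n m̄) + u log p`.
What the truncation removes is dominated by `Yᵢ 1{Yᵢ > u}`. Independence gives
`P(Z > s) ≥ 1 - exp (-∑ᵢ P(Yᵢ > s))`, while Markov's inequality gives `P(Z > s) ≤ 1/2` for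
`s ≥ 2 E Z`; together `∑ᵢ P(Yᵢ > s) ≤ 2 P(Z > s)`, and integrating over `s > u` bounds
`∑ᵢ E[Yᵢ 1{Yᵢ > u}]` by `2 E Z`. Letting `u ↓ 2 E Z` proves (1), and (2) follows from (1) by
adding back the means.
-/

open Real

namespace Finset

variable {ι α δ : Type*}

theorem measurable_sup'' [MeasurableSpace α] [SemilatticeSup α] [MeasurableSup₂ α]
    [MeasurableSpace δ] {s : Finset ι} (hs : s.Nonempty) {f : ι → δ → α}
    (hf : ∀ i ∈ s, Measurable (f i)) : Measurable fun x => s.sup' hs fun i => f i x := by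
  simpa only [← funext (Finset.sup'_apply hs f)] using Finset.measurable_sup' hs hf

theorem integrable_sup'' [NormedAddCommGroup α] [Lattice α] [HasSolidNorm α]
    [IsOrderedAddMonoid α] [MeasurableSpace δ] {μ : Measure δ} {s : Finset ι} (hs : s.Nonempty)
    {f : ι → δ → α} (hf : ∀ i ∈ s, Integrable (f i) μ) :
    Integrable (fun x => s.sup' hs fun i => f i x) μ := by
  simpa only [← funext (Finset.sup'_apply hs f)] using
    Finset.sup'_induction hs f (p := (Integrable · μ)) (fun _ hf _ hg => hf.sup hg) hf

theorem sup'_pow_of_nonneg {R : Type*} [Semiring R] [LinearOrder R] [IsOrderedRing R]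
    {s : Finset ι} (hs : s.Nonempty) {f : ι → R} (hf : ∀ i ∈ s, 0 ≤ f i) (k : ℕ) :
    s.sup' hs f ^ k = s.sup' hs fun i => f i ^ k := by
  obtain ⟨i, hi, hmax⟩ := exists_mem_eq_sup' hs f
  refine le_antisymm ?_ (sup'_le hs _ fun j hj => pow_le_pow_left₀ (hf j hj) (le_sup' f hj) k)
  rw [hmax]
  exact le_sup' (fun i => f i ^ k) hi

theorem sup'_univ_prod {κ : Type*} [Fintype ι] [Fintype κ] [SemilatticeSup α]
    (h : (univ : Finset (ι × κ)).Nonempty) (hι : (univ : Finset ι).Nonempty)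
    (hκ : (univ : Finset κ).Nonempty) (f : ι × κ → α) :
    univ.sup' h f = univ.sup' hι fun i => univ.sup' hκ fun j => f (i, j) :=
  sup'_product_left (s := univ) (t := univ) h f

end Finset

/- The witness is `min u⁻¹ √(a / q)`, which minimises `a / t + t * q` subject to `t * u ≤ 1`. -/
theorem exists_pos_div_add_mul_le {a u q : ℝ} (ha : 0 < a) (hu : 0 < u) :
    ∃ t, 0 < t ∧ t * u ≤ 1 ∧ a / t + t * q ≤ 2 * √(a * q) + 2 * (a * u) := by
  rcases le_or_gt q (a * u ^ 2) with hsmall | hlarge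
  · refine ⟨u⁻¹, by positivity, (inv_mul_cancel₀ hu.ne').le, ?_⟩
    have hq' : u⁻¹ * q ≤ a * u := by
      rw [inv_mul_le_iff₀ hu]; nlinarith
    rw [div_inv_eq_mul]
    nlinarith [sqrt_nonneg (a * q)]
  · have hq0 : 0 < q := lt_of_le_of_lt (by positivity) hlarge
    set t := √(a / q)
    have ht0 : 0 < t := sqrt_pos.mpr (by positivity)
    have ht2 : t ^ 2 = a / q := sq_sqrt (by positivity)
    have htq : t * q = √(a * q) := by
      rw [← sqrt_sq (by positivity : 0 ≤ t * q), mul_pow, ht2]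
      field_simp
    have hat : a / t = t * q := by
      rw [div_eq_iff ht0.ne']
      field_simp at ht2 ⊢
      nlinarith
    refine ⟨t, ht0, ?_, ?_⟩
    · have : (t * u) ^ 2 ≤ 1 := by
        rw [mul_pow, ht2, div_mul_eq_mul_div, div_le_one hq0]; linarith
      nlinarith
    · rw [hat, htq]; nlinarith

theorem abs_le_add_inv_mul_exp_mul_add_exp {x t β : ℝ} (ht : 0 < t) :
    |x| ≤ β + t⁻¹ * exp (-(t * β)) * (exp (t * x) + exp (-t * x)) := by
  have hlin : t * (|x| - β) ≤ exp (t * (|x| - β)) := by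
    linarith [add_one_le_exp (t * (|x| - β))]
  have hsplit : exp (t * (|x| - β)) = exp (-(t * β)) * exp (t * |x|) := by
    rw [← exp_add]; ring_nf
  have habs : exp (t * |x|) ≤ exp (t * x) + exp (-t * x) := by
    rcases abs_cases x with ⟨h, _⟩ | ⟨h, _⟩ <;> rw [h]
    · linarith [exp_pos (-t * x)]
    · rw [mul_neg, ← neg_mul]; linarith [exp_pos (t * x)]
  have : |x| - β ≤ t⁻¹ * exp (t * (|x| - β)) := by
    rw [le_inv_mul_iff₀ ht]; exact hlin
  rw [hsplit] at this
  nlinarith [mul_le_mul_of_nonneg_left habs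
    (by positivity : 0 ≤ t⁻¹ * exp (-(t * β)))]

theorem MeasureTheory.Integrable.ofReal_integral_eq_lintegral_meas_lt {α : Type*}
    [MeasurableSpace α] {μ : Measure α} {f : α → ℝ} (hf : Integrable f μ) (hf0 : 0 ≤ᵐ[μ] f) :
    ENNReal.ofReal (∫ x, f x ∂μ) = ∫⁻ s in Set.Ioi 0, μ {x | s < f x} := by
  rw [ofReal_integral_eq_lintegral_ofReal hf hf0,
    lintegral_eq_lintegral_meas_lt μ hf0 hf.aemeasurable]

theorem MeasureTheory.integral_sup'_const_mul {α κ : Type*} [MeasurableSpace α] {μ : Measure α}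
    {s : Finset κ} (hs : s.Nonempty) {c : ℝ} (hc : 0 ≤ c) (f : κ → α → ℝ) :
    ∫ x, s.sup' hs (fun j => c * f j x) ∂μ = c * ∫ x, s.sup' hs (fun j => f j x) ∂μ := by
  simp_rw [← mul₀_sup' hc]
  exact integral_const_mul _ _

namespace ProbabilityTheory

variable {Ω : Type*} [MeasurableSpace Ω] {μ : Measure Ω}

theorem iIndepFun.measureReal_sup'_le_eq_prod {ι : Type*} [Fintype ι]
    (hι : (univ : Finset ι).Nonempty) {Y : ι → Ω → ℝ} (hindep : iIndepFun Y μ) (s : ℝ) :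
    μ.real {ω | univ.sup' hι (fun i => Y i ω) ≤ s} = ∏ i, μ.real {ω | Y i ω ≤ s} := by
  have hinter : {ω | univ.sup' hι (fun i => Y i ω) ≤ s} = ⋂ i, {ω | Y i ω ≤ s} := by
    ext ω; simp [sup'_le_iff]
  simp only [measureReal_def, hinter,
    hindep.meas_iInter (s := fun i => {ω | Y i ω ≤ s}) fun i => ⟨Set.Iic s, measurableSet_Iic, rfl⟩,
    ENNReal.toReal_prod]

theorem sub_truncation_le_indicator {α : Type*} {f g : α → ℝ} {u : ℝ} {ω : α} (hu : 0 < u)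
    (hf : 0 ≤ f ω) (hfg : f ω ≤ g ω) : f ω - truncation f u ω ≤ {ω | u < g ω}.indicator g ω := by
  simp only [truncation, Function.comp_apply, Set.indicator, Set.mem_Ioc, Set.mem_ofPred_eq, id]
  split_ifs with h₁ h₂ h₂ <;> first | linarith | exact absurd ⟨by linarith, by linarith⟩ h₁

section Truncation

variable {ι κ : Type*} [Fintype ι] {A : ι → Ω → κ → ℝ}

def centeredTruncSum (μ : Measure Ω) (A : ι → Ω → κ → ℝ) (u : ℝ) (j : κ) (ω : Ω) : ℝ :=
  ∑ i, (truncation (fun ω => A i ω j) u ω - ∫ ω', truncation (fun ω => A i ω j) u ω' ∂μ)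

theorem measurable_centeredTruncSum (hA : ∀ i, Measurable (A i)) (u : ℝ) (j : κ) :
    Measurable (centeredTruncSum μ A u j) :=
  Finset.measurable_sum _ fun i _ => ((measurable_id.indicator measurableSet_Ioc).comp
    ((measurable_pi_apply j).comp (hA i))).sub_const _

end Truncation

variable [IsProbabilityMeasure μ]

theorem mgf_le_exp_mul_sq {W : Ω → ℝ} (hW : AEStronglyMeasurable W μ) {u v t : ℝ}
    (hWu : ∀ ω, |W ω| ≤ u) (hmean : ∫ ω, W ω ∂μ = 0) (hvar : ∫ ω, W ω ^ 2 ∂μ ≤ v)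
    (ht : |t| * u ≤ 1) : mgf W μ t ≤ exp (t ^ 2 * v) := by
  have hWint : Integrable W μ := .of_bound hW u (ae_of_all _ hWu)
  have hW2int : Integrable (fun ω => W ω ^ 2) μ :=
    .of_bound (hW.pow 2) (u ^ 2) (ae_of_all _ fun ω => by
      rw [Real.norm_eq_abs, abs_pow]; exact pow_le_pow_left₀ (abs_nonneg _) (hWu ω) 2)
  have hpt : ∀ ω, exp (t * W ω) ≤ 1 + t * W ω + t ^ 2 * W ω ^ 2 := fun ω => by
    have hsmall : |t * W ω| ≤ 1 := by
      rw [abs_mul]; exact (mul_le_mul_of_nonneg_left (hWu ω) (abs_nonneg t)).trans ht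
    have := (le_abs_self _).trans (abs_exp_sub_one_sub_id_le hsmall)
    linarith [mul_pow t (W ω) 2]
  have hlin : Integrable (fun ω => 1 + t * W ω) μ := (integrable_const 1).add (hWint.const_mul t)
  have hquad : Integrable (fun ω => t ^ 2 * W ω ^ 2) μ := hW2int.const_mul _
  calc mgf W μ t ≤ ∫ ω, (1 + t * W ω + t ^ 2 * W ω ^ 2) ∂μ :=
        integral_mono_of_nonneg (ae_of_all _ fun ω => (exp_pos _).le) (hlin.add hquad)
          (ae_of_all _ hpt)
    _ = 1 + t ^ 2 * ∫ ω, W ω ^ 2 ∂μ := by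
        rw [integral_add hlin hquad, integral_add (integrable_const 1) (hWint.const_mul t),
          integral_const_mul, integral_const_mul, hmean]
        simp
    _ ≤ 1 + t ^ 2 * v := by gcongr
    _ ≤ exp (t ^ 2 * v) := by linarith [add_one_le_exp (t ^ 2 * v)]

theorem iIndepFun.mgf_sum_le {ι : Type*} [Fintype ι] {W : ι → Ω → ℝ} (hindep : iIndepFun W μ)
    (hW : ∀ i, Measurable (W i)) {u t : ℝ} {v : ι → ℝ} (hWu : ∀ i ω, |W i ω| ≤ u)
    (hmean : ∀ i, ∫ ω, W i ω ∂μ = 0) (hvar : ∀ i, ∫ ω, W i ω ^ 2 ∂μ ≤ v i)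
    (ht : |t| * u ≤ 1) : mgf (fun ω => ∑ i, W i ω) μ t ≤ exp (t ^ 2 * ∑ i, v i) := by
  calc mgf (fun ω => ∑ i, W i ω) μ t = ∏ i, mgf (W i) μ t := by
        rw [← hindep.mgf_sum hW univ, Finset.sum_fn]
    _ ≤ ∏ i, exp (t ^ 2 * v i) := prod_le_prod (fun i _ => mgf_nonneg) fun i _ =>
        mgf_le_exp_mul_sq (hW i).aestronglyMeasurable (hWu i) (hmean i) (hvar i) ht
    _ = exp (t ^ 2 * ∑ i, v i) := by rw [← exp_sum, mul_sum]

theorem integral_sub_integral_sq_le {b : Ω → ℝ} (hb : Integrable b μ) {u : ℝ}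
    (hb0 : ∀ ω, 0 ≤ b ω) (hbu : ∀ ω, b ω ≤ u) :
    ∫ ω, (b ω - ∫ ω', b ω' ∂μ) ^ 2 ∂μ ≤ u * ∫ ω, b ω ∂μ := by
  set c := ∫ ω, b ω ∂μ
  have hc0 : 0 ≤ c := integral_nonneg hb0
  calc ∫ ω, (b ω - c) ^ 2 ∂μ ≤ ∫ ω, ((u - 2 * c) * b ω + c ^ 2) ∂μ :=
        integral_mono_of_nonneg (ae_of_all _ fun ω => sq_nonneg _)
          ((hb.const_mul _).add (integrable_const _))
          (ae_of_all _ fun ω => by nlinarith [hb0 ω, hbu ω])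
    _ = u * c - c ^ 2 := by
        rw [integral_add (hb.const_mul _) (integrable_const _), integral_const_mul]
        simp
        ring
    _ ≤ u * c := by nlinarith

theorem iIndepFun.mgf_sum_truncation_sub_le {ι : Type*} [Fintype ι] {V : ι → Ω → ℝ}
    (hindep : iIndepFun V μ) (hV : ∀ i, Measurable (V i)) (hV0 : ∀ i, 0 ≤ V i)
    (hint : ∀ i, Integrable (V i) μ) {u t : ℝ} (hu : 0 < u) (ht : |t| * u ≤ 1) :
    mgf (fun ω => ∑ i, (truncation (V i) u ω - ∫ ω', truncation (V i) u ω' ∂μ)) μ t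
      ≤ exp (t ^ 2 * (u * ∑ i, ∫ ω, V i ω ∂μ)) := by
  set c : ι → ℝ := fun i => ∫ ω, truncation (V i) u ω ∂μ
  have hmeas : Measurable (Set.indicator (Set.Ioc (-u) u) (id : ℝ → ℝ)) :=
    measurable_id.indicator measurableSet_Ioc
  have hT0 : ∀ i ω, 0 ≤ truncation (V i) u ω := fun i ω => truncation_nonneg u (hV0 i ω)
  have hTu : ∀ i ω, truncation (V i) u ω ≤ u := fun i ω =>
    (le_abs_self _).trans ((abs_truncation_le_bound _ _ _).trans_eq (abs_of_pos hu))
  have hTint : ∀ i, Integrable (truncation (V i) u) μ := fun i =>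
    (hV i).aestronglyMeasurable.integrable_truncation
  have hc0 : ∀ i, 0 ≤ c i := fun i => integral_nonneg (hT0 i)
  have hcu : ∀ i, c i ≤ u := fun i => by
    simpa using integral_mono (hTint i) (integrable_const u) (hTu i)
  have hWindep : iIndepFun (fun i ω => truncation (V i) u ω - c i) μ :=
    hindep.comp (fun i x => Set.indicator (Set.Ioc (-u) u) id x - c i) fun i => hmeas.sub_const _
  have hsum := hWindep.mgf_sum_le (fun i => (hmeas.comp (hV i)).sub_const _)
    (u := u) (t := t) (v := fun i => u * c i)
    (fun i ω => abs_le.mpr ⟨by linarith [hT0 i ω, hcu i], by linarith [hTu i ω, hc0 i]⟩)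
    (fun i => by simp [integral_sub (hTint i) (integrable_const _), c])
    (fun i => integral_sub_integral_sq_le (hTint i) (hT0 i) (hTu i)) ht
  refine hsum.trans (exp_le_exp.mpr (mul_le_mul_of_nonneg_left ?_ (sq_nonneg t)))
  rw [← mul_sum]
  exact mul_le_mul_of_nonneg_left (sum_le_sum fun i _ =>
    integral_truncation_le_integral_of_nonneg (hint i) (hV0 i)) hu.le

theorem integral_sup'_abs_le_of_sum_mgf_le {ι : Type*} [Fintype ι]
    (hι : (univ : Finset ι).Nonempty) {S : ι → Ω → ℝ} {t β : ℝ} (ht : 0 < t)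
    (hint : ∀ i, Integrable (fun ω => exp (t * S i ω)) μ)
    (hint' : ∀ i, Integrable (fun ω => exp (-t * S i ω)) μ)
    (hmgf : ∑ i, (mgf (S i) μ t + mgf (S i) μ (-t)) ≤ exp (t * β)) :
    ∫ ω, univ.sup' hι (fun i => |S i ω|) ∂μ ≤ β + t⁻¹ := by
  set E : Ω → ℝ := fun ω => ∑ i, (exp (t * S i ω) + exp (-t * S i ω))
  have hEint : Integrable E μ := integrable_finsetSum _ fun i _ => (hint i).add (hint' i)
  have hpt : ∀ ω, univ.sup' hι (fun i => |S i ω|) ≤ β + t⁻¹ * exp (-(t * β)) * E ω :=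
    fun ω => sup'_le hι _ fun i _ => abs_le_add_inv_mul_exp_mul_add_exp ht |>.trans <| by
      gcongr
      exact single_le_sum (f := fun i => exp (t * S i ω) + exp (-t * S i ω))
        (fun _ _ => by positivity) (mem_univ i)
  calc ∫ ω, univ.sup' hι (fun i => |S i ω|) ∂μ
      ≤ ∫ ω, (β + t⁻¹ * exp (-(t * β)) * E ω) ∂μ :=
        integral_mono_of_nonneg (ae_of_all _ fun ω => (abs_nonneg _).trans
          (le_sup' (fun i => |S i ω|) hι.choose_spec))
          ((integrable_const β).add (hEint.const_mul _)) (ae_of_all _ hpt)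
    _ = β + t⁻¹ * exp (-(t * β)) * ∑ i, (mgf (S i) μ t + mgf (S i) μ (-t)) := by
        rw [integral_add (integrable_const β) (hEint.const_mul _), integral_const_mul,
          integral_finsetSum univ (f := fun i ω => exp (t * S i ω) + exp (-t * S i ω))
            fun i _ => (hint i).add (hint' i)]
        simp only [integral_add (hint _) (hint' _), integral_const, probReal_univ, one_smul, mgf]
    _ ≤ β + t⁻¹ * exp (-(t * β)) * exp (t * β) := by gcongr
    _ = β + t⁻¹ := by rw [mul_assoc, ← exp_add, neg_add_cancel, exp_zero, mul_one]

section Tail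

variable {ι : Type*} [Fintype ι] (hι : (univ : Finset ι).Nonempty) {Y : ι → Ω → ℝ}

theorem iIndepFun.sum_measureReal_lt_le_two_mul (hindep : iIndepFun Y μ)
    (hY : ∀ i, Measurable (Y i)) (hY0 : ∀ i, 0 ≤ Y i)
    (hZ : Integrable (fun ω => univ.sup' hι fun i => Y i ω) μ) {s : ℝ} (hs : 0 < s)
    (hsZ : 2 * ∫ ω, univ.sup' hι (fun i => Y i ω) ∂μ ≤ s) :
    ∑ i, μ.real {ω | s < Y i ω} ≤ 2 * μ.real {ω | s < univ.sup' hι fun i => Y i ω} := by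
  set Z := fun ω => univ.sup' hι fun i => Y i ω
  have hZ0 : ∀ ω, 0 ≤ Z ω := fun ω => (hY0 _ ω).trans (le_sup' (fun i => Y i ω) hι.choose_spec)
  have hcompl : ∀ f : Ω → ℝ, Measurable f →
      μ.real {ω | f ω ≤ s} = 1 - μ.real {ω | s < f ω} := fun f hf => by
    rw [← probReal_compl_eq_one_sub (measurableSet_lt measurable_const hf)]
    congr 1; ext; simp
  set P := μ.real {ω | s < Z ω}
  set q := ∑ i, μ.real {ω | s < Y i ω}
  have hP : P ≤ 1 / 2 := by
    have hmarkov := mul_meas_ge_le_integral_of_nonneg (ae_of_all _ hZ0) hZ s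
    have : P ≤ μ.real {ω | s ≤ Z ω} :=
      measureReal_mono (Set.ofPred_subset_ofPred.mpr fun ω => le_of_lt)
    rw [le_div_iff₀ two_pos]; nlinarith
  have hprod : 1 - P ≤ exp (-q) := by
    rw [← hcompl Z (measurable_sup'' hι fun i _ => hY i),
      hindep.measureReal_sup'_le_eq_prod hι, ← sum_neg_distrib, exp_sum]
    exact prod_le_prod (fun i _ => by rw [hcompl _ (hY i)]; simp [measureReal_le_one])
      fun i _ => by rw [hcompl _ (hY i)]; linarith [add_one_le_exp (-μ.real {ω | s < Y i ω})]
  have hq0 : 0 ≤ q := sum_nonneg fun i _ => measureReal_nonneg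
  have hexp : (1 + q) * exp (-q) ≤ 1 := by
    calc (1 + q) * exp (-q) ≤ exp q * exp (-q) := by gcongr; linarith [add_one_le_exp q]
      _ = 1 := by rw [← exp_add, add_neg_cancel, exp_zero]
  -- `(1 - P) (1 + q) ≤ 1` and `P ≤ 1 / 2` give `q ≤ P / (1 - P) ≤ 2 P`.
  nlinarith [mul_le_mul_of_nonneg_left hprod (by linarith : 0 ≤ 1 + q)]

theorem iIndepFun.sum_measure_lt_le_two_mul (hindep : iIndepFun Y μ)
    (hY : ∀ i, Measurable (Y i)) (hY0 : ∀ i, 0 ≤ Y i)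
    (hZ : Integrable (fun ω => univ.sup' hι fun i => Y i ω) μ) {s : ℝ} (hs : 0 < s)
    (hsZ : 2 * ∫ ω, univ.sup' hι (fun i => Y i ω) ∂μ ≤ s) :
    ∑ i, μ {ω | s < Y i ω} ≤ 2 * μ {ω | s < univ.sup' hι fun i => Y i ω} := by
  calc ∑ i, μ {ω | s < Y i ω} = ENNReal.ofReal (∑ i, μ.real {ω | s < Y i ω}) := by
        rw [ENNReal.ofReal_sum_of_nonneg fun i _ => measureReal_nonneg]
        exact sum_congr rfl fun i _ => (ofReal_measureReal (measure_ne_top _ _)).symm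
    _ ≤ ENNReal.ofReal (2 * μ.real {ω | s < univ.sup' hι fun i => Y i ω}) :=
        ENNReal.ofReal_le_ofReal (hindep.sum_measureReal_lt_le_two_mul hι hY hY0 hZ hs hsZ)
    _ = _ := by rw [ENNReal.ofReal_mul zero_le_two, ofReal_measureReal, ENNReal.ofReal_ofNat]

theorem iIndepFun.sum_integral_indicator_lt_le (hindep : iIndepFun Y μ)
    (hY : ∀ i, Measurable (Y i)) (hY0 : ∀ i, 0 ≤ Y i)
    (hZ : Integrable (fun ω => univ.sup' hι fun i => Y i ω) μ) {u : ℝ}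
    (hu : 2 * ∫ ω, univ.sup' hι (fun i => Y i ω) ∂μ ≤ u) :
    ∑ i, ∫ ω, {ω | u < Y i ω}.indicator (Y i) ω ∂μ
      ≤ 2 * ∫ ω, univ.sup' hι (fun i => Y i ω) ∂μ := by
  set Z := fun ω => univ.sup' hι fun i => Y i ω
  set D := fun i => {ω | u < Y i ω}.indicator (Y i)
  have hZ0 : ∀ ω, 0 ≤ Z ω := fun ω => (hY0 _ ω).trans (le_sup' (fun i => Y i ω) hι.choose_spec)
  have hEZ0 : 0 ≤ ∫ ω, Z ω ∂μ := integral_nonneg hZ0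
  have hD0 : ∀ i, 0 ≤ D i := fun i => Set.indicator_nonneg fun ω _ => hY0 i ω
  have hDmeas : ∀ i, Measurable (D i) := fun i =>
    (hY i).indicator (measurableSet_lt measurable_const (hY i))
  have hDint : ∀ i, Integrable (D i) μ := fun i =>
    hZ.mono' (hDmeas i).aestronglyMeasurable (ae_of_all _ fun ω => by
      rw [Real.norm_eq_abs, abs_of_nonneg (hD0 i ω)]
      exact (Set.indicator_le_self' fun ω _ => (hY0 i ω)) ω |>.trans
        (le_sup' (fun i => Y i ω) (mem_univ i)))
  have hlevel : ∀ i, ∀ s > 0, {ω | s < D i ω} = {ω | max s u < Y i ω} := fun i s hs => by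
    ext ω
    by_cases h : u < Y i ω <;> simp [D, h, hs.not_gt]
  have htail : ∀ s > 0, ∑ i, μ {ω | max s u < Y i ω} ≤ 2 * μ {ω | s < Z ω} := fun s hs =>
    (hindep.sum_measure_lt_le_two_mul hι hY hY0 hZ (lt_of_lt_of_le hs (le_max_left s u))
      (hu.trans (le_max_right s u))).trans (by gcongr; exact le_max_left s u)
  rw [← ENNReal.ofReal_le_ofReal_iff (by positivity),
    ENNReal.ofReal_sum_of_nonneg fun i _ => integral_nonneg (hD0 i)]
  calc ∑ i, ENNReal.ofReal (∫ ω, D i ω ∂μ)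
      = ∫⁻ s in Set.Ioi 0, ∑ i, μ {ω | max s u < Y i ω} := by
        rw [lintegral_finsetSum univ (f := fun i s => μ {ω | max s u < Y i ω})
          fun i _ => Antitone.measurable fun s s' hss =>
          measure_mono fun ω hω => lt_of_le_of_lt (max_le_max hss le_rfl) hω]
        refine sum_congr rfl fun i _ => ?_
        rw [(hDint i).ofReal_integral_eq_lintegral_meas_lt (ae_of_all _ (hD0 i))]
        exact setLIntegral_congr_fun measurableSet_Ioi fun s hs => by rw [hlevel i s hs]
    _ ≤ ∫⁻ s in Set.Ioi 0, 2 * μ {ω | s < Z ω} := setLIntegral_mono' measurableSet_Ioi htail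
    _ = ENNReal.ofReal (2 * ∫ ω, Z ω ∂μ) := by
        rw [lintegral_const_mul' _ _ ENNReal.ofNat_ne_top,
          ← hZ.ofReal_integral_eq_lintegral_meas_lt (ae_of_all _ hZ0),
          ENNReal.ofReal_mul zero_le_two, ENNReal.ofReal_ofNat]

end Tail

section Coordinates

variable {ι κ : Type*} [Fintype ι] {A : ι → Ω → κ → ℝ}

theorem abs_centeredTruncSum_le (u : ℝ) (j : κ) (ω : Ω) :
    |centeredTruncSum μ A u j ω| ≤ Fintype.card ι * (2 * |u|) := by
  refine (abs_sum_le_sum_abs _ _).trans ((sum_le_sum fun i _ => (abs_sub _ _).trans ?_).trans_eq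
    (by simp : ∑ _i : ι, 2 * |u| = _))
  have hmean := norm_integral_le_of_norm_le_const (μ := μ) (f := truncation (fun ω => A i ω j) u)
    (ae_of_all _ fun ω => abs_truncation_le_bound (fun ω => A i ω j) u ω)
  rw [probReal_univ, mul_one, Real.norm_eq_abs] at hmean
  linarith [abs_truncation_le_bound (fun ω => A i ω j) u ω]

theorem integrable_exp_mul_centeredTruncSum (hA : ∀ i, Measurable (A i)) (u : ℝ) (j : κ)
    (s : ℝ) : Integrable (fun ω => exp (s * centeredTruncSum μ A u j ω)) μ :=
  .of_bound ((measurable_centeredTruncSum hA u j).const_mul s).exp.aestronglyMeasurable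
    (exp (|s| * (Fintype.card ι * (2 * |u|)))) (ae_of_all _ fun ω => by
      rw [Real.norm_eq_abs, abs_of_pos (exp_pos _), exp_le_exp]
      exact (le_abs_self _).trans (by rw [abs_mul]; gcongr; exact abs_centeredTruncSum_le u j ω))

theorem abs_sum_sub_integral_le_abs_centeredTruncSum_add (hA0 : ∀ i ω j, 0 ≤ A i ω j)
    (hint : ∀ i j, Integrable (fun ω => A i ω j) μ) {Y : ι → Ω → ℝ} (hY : ∀ i, Measurable (Y i))
    (hYint : ∀ i, Integrable (Y i) μ) (hAY : ∀ i ω j, A i ω j ≤ Y i ω) {u : ℝ} (hu : 0 < u)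
    (j : κ) (ω : Ω) :
    |∑ i, (A i ω j - ∫ ω', A i ω' j ∂μ)| ≤ |centeredTruncSum μ A u j ω|
      + (∑ i, {ω | u < Y i ω}.indicator (Y i) ω
        + ∑ i, ∫ ω, {ω | u < Y i ω}.indicator (Y i) ω ∂μ) := by
  set D := fun i => {ω | u < Y i ω}.indicator (Y i)
  set T := fun i => truncation (fun ω => A i ω j) u
  have hTint : ∀ i, Integrable (T i) μ := fun i =>
    (hint i j).aestronglyMeasurable.integrable_truncation
  have hgap : ∀ i ω, 0 ≤ A i ω j - T i ω ∧ A i ω j - T i ω ≤ D i ω := fun i ω =>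
    ⟨sub_nonneg.mpr ((le_abs_self _).trans ((abs_truncation_le_abs_self _ _ _).trans_eq
      (abs_of_nonneg (hA0 i ω j)))),
      sub_truncation_le_indicator (f := fun ω => A i ω j) hu (hA0 i ω j) (hAY i ω j)⟩
  have hEgap : ∀ i, 0 ≤ ∫ ω, A i ω j ∂μ - ∫ ω, T i ω ∂μ ∧
      ∫ ω, A i ω j ∂μ - ∫ ω, T i ω ∂μ ≤ ∫ ω, D i ω ∂μ := fun i => by
    rw [← integral_sub (hint i j) (hTint i)]
    exact ⟨integral_nonneg fun ω => (hgap i ω).1, integral_mono ((hint i j).sub (hTint i))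
      ((hYint i).indicator (measurableSet_lt measurable_const (hY i))) fun ω => (hgap i ω).2⟩
  have hsplit : ∑ i, (A i ω j - ∫ ω', A i ω' j ∂μ) = centeredTruncSum μ A u j ω
      + (∑ i, (A i ω j - T i ω) - ∑ i, (∫ ω', A i ω' j ∂μ - ∫ ω', T i ω' ∂μ)) := by
    simp only [centeredTruncSum, T, ← sum_sub_distrib, ← sum_add_distrib]
    exact sum_congr rfl fun i _ => by ring
  rw [hsplit]
  refine (abs_add_le _ _).trans (add_le_add_right ((abs_sub _ _).trans (add_le_add ?_ ?_)) _)
  · rw [abs_of_nonneg (sum_nonneg fun i _ => (hgap i ω).1)]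
    exact sum_le_sum fun i _ => (hgap i ω).2
  · rw [abs_of_nonneg (sum_nonneg fun i _ => (hEgap i).1)]
    exact sum_le_sum fun i _ => (hEgap i).2

variable [Fintype κ] (hκ : (univ : Finset κ).Nonempty)

theorem integral_sup'_abs_centeredTruncSum_le (hA : ∀ i, Measurable (A i))
    (hindep : iIndepFun A μ) (hA0 : ∀ i ω j, 0 ≤ A i ω j)
    (hint : ∀ i j, Integrable (fun ω => A i ω j) μ) {m u : ℝ}
    (hm : ∀ j, ∑ i, ∫ ω, A i ω j ∂μ ≤ m) (hu : 0 < u) :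
    ∫ ω, univ.sup' hκ (fun j => |centeredTruncSum μ A u j ω|) ∂μ
      ≤ 2 * √((log (2 * Fintype.card κ) + 1) * (u * m))
        + 2 * ((log (2 * Fintype.card κ) + 1) * u) := by
  set L := log (2 * Fintype.card κ)
  have hcard : (1 : ℝ) ≤ Fintype.card κ :=
    Nat.one_le_cast.mpr (Fintype.card_pos_iff.mpr ⟨hκ.choose⟩)
  have hL : 0 ≤ L := log_nonneg (by linarith)
  obtain ⟨t, ht, htu, hbound⟩ := exists_pos_div_add_mul_le (a := L + 1) (q := u * m)
    (by positivity) hu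
  have hmgf : ∀ j s, |s| = t → mgf (centeredTruncSum μ A u j) μ s ≤ exp (t ^ 2 * (u * m)) :=
    fun j s hs => by
      have hV : iIndepFun (fun i ω => A i ω j) μ :=
        hindep.comp (fun _ v => v j) fun _ => measurable_pi_apply j
      have := hV.mgf_sum_truncation_sub_le (fun i => (measurable_pi_apply j).comp (hA i))
        (fun i ω => hA0 i ω j) (fun i => hint i j) hu (hs ▸ htu)
      rw [← sq_abs s, hs] at this
      exact this.trans (exp_le_exp.mpr (by gcongr; exact hm j))
  have hsum : ∑ j, (mgf (centeredTruncSum μ A u j) μ t + mgf (centeredTruncSum μ A u j) μ (-t))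
      ≤ exp (t * (L / t + t * (u * m))) := by
    calc _ ≤ ∑ _j : κ, 2 * exp (t ^ 2 * (u * m)) := sum_le_sum fun j _ => by
          linarith [hmgf j t (abs_of_pos ht), hmgf j (-t) (by rw [abs_neg, abs_of_pos ht])]
      _ = exp L * exp (t ^ 2 * (u * m)) := by
          rw [sum_const, card_univ, nsmul_eq_mul, exp_log (by linarith)]; ring
      _ = exp (t * (L / t + t * (u * m))) := by
          rw [← exp_add]; congr 1; field_simp
  calc _ ≤ L / t + t * (u * m) + t⁻¹ := integral_sup'_abs_le_of_sum_mgf_le hκ ht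
        (fun j => integrable_exp_mul_centeredTruncSum hA u j t)
        (fun j => integrable_exp_mul_centeredTruncSum hA u j (-t)) hsum
    _ = (L + 1) / t + t * (u * m) := by ring
    _ ≤ _ := hbound

theorem integral_sup'_abs_sum_sub_integral_le_of_lt (hι : (univ : Finset ι).Nonempty)
    (hA : ∀ i, Measurable (A i)) (hindep : iIndepFun A μ) (hA0 : ∀ i ω j, 0 ≤ A i ω j)
    (hint : ∀ i j, Integrable (fun ω => A i ω j) μ) {u : ℝ}
    (hu : 2 * ∫ ω, univ.sup' hι (fun i => univ.sup' hκ fun j => A i ω j) ∂μ < u) :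
    ∫ ω, univ.sup' hκ (fun j => |∑ i, (A i ω j - ∫ ω', A i ω' j ∂μ)|) ∂μ
      ≤ ∫ ω, univ.sup' hκ (fun j => |centeredTruncSum μ A u j ω|) ∂μ
        + 4 * ∫ ω, univ.sup' hι (fun i => univ.sup' hκ fun j => A i ω j) ∂μ := by
  set Y := fun i ω => univ.sup' hκ fun j => A i ω j
  set D := fun i => {ω | u < Y i ω}.indicator (Y i)
  have hAY : ∀ i ω j, A i ω j ≤ Y i ω := fun i ω j => le_sup' (fun j => A i ω j) (mem_univ j)
  have hY : ∀ i, Measurable (Y i) := fun i =>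
    measurable_sup'' hκ fun j _ => (measurable_pi_apply j).comp (hA i)
  have hY0 : ∀ i, 0 ≤ Y i := fun i ω => (hA0 i ω _).trans (hAY i ω hκ.choose)
  have hYint : ∀ i, Integrable (Y i) μ := fun i => integrable_sup'' hκ fun j _ => hint i j
  have hYindep : iIndepFun Y μ := hindep.comp (fun _ v => univ.sup' hκ fun j => v j)
    fun _ => measurable_sup'' hκ fun j _ => measurable_pi_apply j
  have hD := hYindep.sum_integral_indicator_lt_le hι hY hY0
    (integrable_sup'' hι fun i _ => hYint i) hu.le
  have hEZ : 0 ≤ ∫ ω, univ.sup' hι (fun i => Y i ω) ∂μ :=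
    integral_nonneg fun ω => (hY0 hι.choose ω).trans (le_sup' (fun i => Y i ω) hι.choose_spec)
  have hSint : Integrable (fun ω => univ.sup' hκ fun j => |centeredTruncSum μ A u j ω|) μ :=
    integrable_sup'' hκ fun j _ =>
      .of_bound (measurable_centeredTruncSum hA u j).abs.aestronglyMeasurable _
        (ae_of_all _ fun ω => by
          rw [Real.norm_eq_abs, abs_abs]; exact abs_centeredTruncSum_le u j ω)
  have hDint : ∀ i, Integrable (D i) μ := fun i =>
    (hYint i).indicator (measurableSet_lt measurable_const (hY i))
  have hDsum : Integrable (fun ω => ∑ i, D i ω) μ := integrable_finsetSum _ fun i _ => hDint i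
  have hrest : Integrable (fun ω => ∑ i, D i ω + ∑ i, ∫ ω, D i ω ∂μ) μ :=
    hDsum.add (integrable_const _)
  calc _ ≤ ∫ ω, (univ.sup' hκ (fun j => |centeredTruncSum μ A u j ω|)
        + (∑ i, D i ω + ∑ i, ∫ ω, D i ω ∂μ)) ∂μ :=
        integral_mono_of_nonneg (ae_of_all _ fun ω => (abs_nonneg _).trans
          (le_sup' (fun j => |∑ i, (A i ω j - ∫ ω', A i ω' j ∂μ)|) hκ.choose_spec))
          (hSint.add hrest) (ae_of_all _ fun ω => sup'_le hκ _ fun j _ =>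
            (abs_sum_sub_integral_le_abs_centeredTruncSum_add hA0 hint hY hYint hAY
              (by linarith) j ω).trans (add_le_add_left (le_sup'
                (fun j => |centeredTruncSum μ A u j ω|) (mem_univ j)) _))
    _ = ∫ ω, univ.sup' hκ (fun j => |centeredTruncSum μ A u j ω|) ∂μ
        + 2 * ∑ i, ∫ ω, D i ω ∂μ := by
        rw [integral_add hSint hrest, integral_add hDsum (integrable_const _),
          integral_finsetSum _ fun i _ => hDint i]
        simp only [integral_const, probReal_univ, one_smul]
        ring
    _ ≤ _ := by linarith

theorem integral_sup'_abs_sum_sub_integral_le (hι : (univ : Finset ι).Nonempty)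
    (hA : ∀ i, Measurable (A i)) (hindep : iIndepFun A μ) (hA0 : ∀ i ω j, 0 ≤ A i ω j)
    (hint : ∀ i j, Integrable (fun ω => A i ω j) μ) {m : ℝ}
    (hm : ∀ j, ∑ i, ∫ ω, A i ω j ∂μ ≤ m) :
    ∫ ω, univ.sup' hκ (fun j => |∑ i, (A i ω j - ∫ ω', A i ω' j ∂μ)|) ∂μ
      ≤ 2 * √((log (2 * Fintype.card κ) + 1)
            * ((2 * ∫ ω, univ.sup' hι (fun i => univ.sup' hκ fun j => A i ω j) ∂μ) * m))
        + 2 * ((log (2 * Fintype.card κ) + 1)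
            * (2 * ∫ ω, univ.sup' hι (fun i => univ.sup' hκ fun j => A i ω j) ∂μ))
        + 4 * ∫ ω, univ.sup' hι (fun i => univ.sup' hκ fun j => A i ω j) ∂μ := by
  set a := log (2 * Fintype.card κ) + 1
  set EZ := ∫ ω, univ.sup' hι (fun i => univ.sup' hκ fun j => A i ω j) ∂μ
  have hEZ : 0 ≤ EZ := integral_nonneg fun ω =>
    (hA0 hι.choose ω hκ.choose).trans (le_sup'_of_le _ hι.choose_spec (le_sup' _ hκ.choose_spec))
  -- Truncating needs `u > 0` while `2 * EZ` may vanish, so let `u ↓ 2 * EZ` instead.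
  have hbound : Continuous fun u => 2 * √(a * (u * m)) + 2 * (a * u) + 4 * EZ := by fun_prop
  refine ge_of_tendsto (hbound.continuousWithinAt (s := Set.Ioi (2 * EZ)) (x := 2 * EZ)).tendsto
    (eventually_nhdsWithin_of_forall fun u (hu : 2 * EZ < u) => ?_)
  exact (integral_sup'_abs_sum_sub_integral_le_of_lt hκ hι hA hindep hA0 hint hu).trans
    (by linarith [integral_sup'_abs_centeredTruncSum_le hκ hA hindep hA0 hint hm (by linarith)])

theorem integral_sup'_mul_sum_le (hint : ∀ i j, Integrable (fun ω => A i ω j) μ) {c : ℝ}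
    (hc : 0 ≤ c) :
    ∫ ω, univ.sup' hκ (fun j => c * ∑ i, A i ω j) ∂μ
      ≤ ∫ ω, univ.sup' hκ (fun j => c * |∑ i, (A i ω j - ∫ ω', A i ω' j ∂μ)|) ∂μ
        + univ.sup' hκ (fun j => c * ∑ i, ∫ ω, A i ω j ∂μ) := by
  have hpt : ∀ ω, univ.sup' hκ (fun j => c * ∑ i, A i ω j)
      ≤ univ.sup' hκ (fun j => c * |∑ i, (A i ω j - ∫ ω', A i ω' j ∂μ)|)
        + univ.sup' hκ (fun j => c * ∑ i, ∫ ω, A i ω j ∂μ) := fun ω => sup'_le hκ _ fun j _ => by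
    have hcentered := le_sup' (fun j => c * |∑ i, (A i ω j - ∫ ω', A i ω' j ∂μ)|) (mem_univ j)
    have hmean := le_sup' (fun j => c * ∑ i, ∫ ω, A i ω j ∂μ) (mem_univ j)
    have hsplit : c * ∑ i, A i ω j
        = c * ∑ i, (A i ω j - ∫ ω', A i ω' j ∂μ) + c * ∑ i, ∫ ω, A i ω j ∂μ := by
      rw [← mul_add, ← sum_add_distrib]; simp
    nlinarith [mul_le_mul_of_nonneg_left (le_abs_self (∑ i, (A i ω j - ∫ ω', A i ω' j ∂μ))) hc]
  have hcentered_int : Integrable (fun ω =>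
      univ.sup' hκ (fun j => c * |∑ i, (A i ω j - ∫ ω', A i ω' j ∂μ)|)) μ :=
    integrable_sup'' hκ fun j _ =>
      ((integrable_finsetSum _ fun i _ => (hint i j).sub (integrable_const _)).abs).const_mul c
  calc _ ≤ ∫ ω, (univ.sup' hκ (fun j => c * |∑ i, (A i ω j - ∫ ω', A i ω' j ∂μ)|)
        + univ.sup' hκ (fun j => c * ∑ i, ∫ ω, A i ω j ∂μ)) ∂μ :=
        integral_mono (integrable_sup'' hκ fun j _ =>
          (integrable_finsetSum _ fun i _ => hint i j).const_mul c)
          (hcentered_int.add (integrable_const _)) hpt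
    _ = _ := by rw [integral_add hcentered_int (integrable_const _)]; simp

end Coordinates

end ProbabilityTheory

/- First `n⁻¹ Δ ≤ 5 √(ℓ M m / n) + 16 ℓ M / n`; after AM-GM the second bound needs
`C ≥ 16 + 5 / 2`, whence `19`. -/
theorem inv_mul_le_and_inv_mul_add_le {n ℓ a M₁ M m Δ : ℝ} (hn : 1 ≤ n) (hℓ : 1 ≤ ℓ)
    (ha : a ≤ 3 * ℓ) (hM₁ : 0 ≤ M₁) (hM : M₁ ≤ M) (hm : 0 ≤ m)
    (hΔ : Δ ≤ 2 * √(a * (2 * M₁ * (n * m))) + 2 * (a * (2 * M₁)) + 4 * M₁) :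
    n⁻¹ * Δ ≤ 2 * 19 ^ 2 * (ℓ / n) * M + 2 * 19 * √(ℓ / n) * √M * √m ∧
      n⁻¹ * Δ + m ≤ 19 * M * n⁻¹ * ℓ + 19 * m := by
  have hn0 : 0 < n := by linarith
  have haM : a * M₁ ≤ 3 * ℓ * M := by nlinarith
  set p := √(ℓ / n) * √M
  set y := ℓ / n * M
  have hp0 : 0 ≤ p := by positivity
  have hy0 : 0 ≤ y := mul_nonneg (by positivity) (hM₁.trans hM)
  have hp2 : p ^ 2 = y := by
    simp only [p, y, mul_pow, sq_sqrt (by positivity : 0 ≤ ℓ / n), sq_sqrt (hM₁.trans hM)]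
  have hny : n * y = ℓ * M := by simp only [y]; field_simp
  set x := p * √m
  have hx0 : 0 ≤ x := by positivity
  have hx2 : x ^ 2 = y * m := by rw [mul_pow, hp2, sq_sqrt hm]
  have hsqrt : √(a * (2 * M₁ * (n * m))) ≤ 5 / 2 * n * x := by
    rw [sqrt_le_iff, mul_pow, mul_pow, hx2]
    refine ⟨by positivity, ?_⟩
    have hsq : n ^ 2 * (y * m) = n * (ℓ * M) * m := by rw [← hny]; ring
    nlinarith [mul_le_mul_of_nonneg_right haM (by positivity : 0 ≤ n * m),
      mul_nonneg (mul_nonneg (mul_nonneg (by linarith : 0 ≤ ℓ) (hM₁.trans hM)) hn0.le) hm]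
  have hbound : n⁻¹ * Δ ≤ 5 * x + 16 * y := by
    rw [inv_mul_le_iff₀ hn0]
    nlinarith
  have hamgm : 2 * x ≤ y + m := by nlinarith [sq_nonneg (p - √m), sq_sqrt hm]
  have hy : M * n⁻¹ * ℓ = y := by ring
  constructor <;> nlinarith

theorem maximal_inequality_of_nonneg {n p : ℕ} (hn : 1 ≤ n) (hp : 3 ≤ p) {Ω : Type*}
    [MeasurableSpace Ω] {μ : Measure Ω} [IsProbabilityMeasure μ]
    (hι : (univ : Finset (Fin n)).Nonempty) (hκ : (univ : Finset (Fin p)).Nonempty)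
    {A : Fin n → Ω → Fin p → ℝ} (hA : ∀ i, Measurable (A i)) (hindep : iIndepFun A μ)
    (hA0 : ∀ i ω j, 0 ≤ A i ω j) (hint : ∀ i j, Integrable (fun ω => A i ω j) μ) {M : ℝ}
    (hM : ∫ ω, univ.sup' hι (fun i => univ.sup' hκ fun j => A i ω j) ∂μ ≤ M) :
    ∫ ω, univ.sup' hκ (fun j => (n : ℝ)⁻¹ * |∑ i, (A i ω j - ∫ ω', A i ω' j ∂μ)|) ∂μ
        ≤ 2 * 19 ^ 2 * (log p / n) * M + 2 * 19 * √(log p / n) * √M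
          * √(univ.sup' hκ fun j => (n : ℝ)⁻¹ * ∑ i, ∫ ω, A i ω j ∂μ) ∧
      ∫ ω, univ.sup' hκ (fun j => (n : ℝ)⁻¹ * ∑ i, A i ω j) ∂μ
        ≤ 19 * M * (n : ℝ)⁻¹ * log p
          + 19 * univ.sup' hκ fun j => (n : ℝ)⁻¹ * ∑ i, ∫ ω, A i ω j ∂μ := by
  set mbar := univ.sup' hκ fun j => (n : ℝ)⁻¹ * ∑ i, ∫ ω, A i ω j ∂μ
  have hp3 : (3 : ℝ) ≤ p := by exact_mod_cast hp
  have hℓ : 1 ≤ log p := by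
    rw [le_log_iff_exp_le (by positivity)]; linarith [exp_one_lt_d9]
  have hmbar : ∀ j, ∑ i, ∫ ω, A i ω j ∂μ ≤ n * mbar := fun j => by
    rw [← inv_mul_le_iff₀ (by positivity)]
    exact le_sup' (fun j => (n : ℝ)⁻¹ * ∑ i, ∫ ω, A i ω j ∂μ) (mem_univ j)
  obtain ⟨hpart1, hpart2⟩ := inv_mul_le_and_inv_mul_add_le (by exact_mod_cast hn) hℓ
    (by rw [Fintype.card_fin, log_mul two_ne_zero (by positivity)]; linarith [log_two_lt_d9])
    (integral_nonneg fun ω => le_sup'_of_le _ hι.choose_spec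
      (le_sup'_of_le _ hκ.choose_spec (hA0 _ ω _))) hM
    (le_sup'_of_le _ hκ.choose_spec (mul_nonneg (by positivity)
      (sum_nonneg fun i _ => integral_nonneg (hA0 i · _))))
    (integral_sup'_abs_sum_sub_integral_le hκ hι hA hindep hA0 hint hmbar)
  have hn0 : (0 : ℝ) ≤ (n : ℝ)⁻¹ := by positivity
  refine ⟨(integral_sup'_const_mul hκ hn0 _).trans_le hpart1,
    (integral_sup'_mul_sum_le hκ hint hn0).trans ?_⟩
  rwa [integral_sup'_const_mul hκ hn0]

/-- **Maximal inequality (Lemma on moments of maxima of averages).**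
For independent random vectors `X_i` in `ℝᵖ`, `p ≥ 3`, with
`m̄_k := max_{j≤p} n⁻¹Σᵢ E|X_{ij}|^k` and any `M_k ≥ E[maxᵢ‖X_i‖_∞^k]`:
(1) `E[max_j n⁻¹|Σᵢ(|X_{ij}|^k − E|X_{ij}|^k)|]
      ≤ 2C²(log p/n)M_k + 2C√(log p/n)M_k^{1/2}m̄_k^{1/2}`, and
(2) `E[max_j n⁻¹Σᵢ|X_{ij}|^k] ≤ C M_k n⁻¹ log p + C m̄_k`,
for a universal constant `C`. -/
theorem maximal_inequality :
    ∃ C : ℝ, 0 < C ∧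
      ∀ (n pd : ℕ) (hn : 1 ≤ n) (hp : 3 ≤ pd)
        (Ω : Type) [MeasurableSpace Ω] (μ : Measure Ω) [IsProbabilityMeasure μ]
        (X : Fin n → Ω → Fin pd → ℝ) (k : ℕ) (_hk : 1 ≤ k) (M : ℝ),
        (∀ i, Measurable (X i)) →
        iIndepFun X μ →
        (∀ i j, Integrable (fun ω => |X i ω j| ^ k) μ) →
        -- M is an upper bound for E[maxᵢ ‖Xᵢ‖_∞ ^ k]
        (∫ ω, (Finset.univ.sup'
            (⟨(⟨0, by omega⟩, ⟨0, by omega⟩), Finset.mem_univ _⟩ :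
              (Finset.univ : Finset (Fin n × Fin pd)).Nonempty)
            fun ij => |X ij.1 ω ij.2|) ^ k ∂μ) ≤ M →
        ((∫ ω, Finset.univ.sup'
              (⟨⟨0, by omega⟩, Finset.mem_univ _⟩ :
                (Finset.univ : Finset (Fin pd)).Nonempty)
              (fun j => (n : ℝ)⁻¹ *
                |∑ i, (|X i ω j| ^ k - ∫ ω', |X i ω' j| ^ k ∂μ)|) ∂μ)
            ≤ 2 * C ^ 2 * (Real.log pd / n) * M
              + 2 * C * Real.sqrt (Real.log pd / n) * Real.sqrt M *
                Real.sqrt (Finset.univ.sup'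
                  (⟨⟨0, by omega⟩, Finset.mem_univ _⟩ :
                    (Finset.univ : Finset (Fin pd)).Nonempty)
                  fun j => (n : ℝ)⁻¹ * ∑ i, ∫ ω, |X i ω j| ^ k ∂μ))
        ∧ ((∫ ω, Finset.univ.sup'
              (⟨⟨0, by omega⟩, Finset.mem_univ _⟩ :
                (Finset.univ : Finset (Fin pd)).Nonempty)
              (fun j => (n : ℝ)⁻¹ * ∑ i, |X i ω j| ^ k) ∂μ)
            ≤ C * M * (n : ℝ)⁻¹ * Real.log pd
              + C * (Finset.univ.sup'
                  (⟨⟨0, by omega⟩, Finset.mem_univ _⟩ :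
                    (Finset.univ : Finset (Fin pd)).Nonempty)
                  fun j => (n : ℝ)⁻¹ * ∑ i, ∫ ω, |X i ω j| ^ k ∂μ)) := by
  refine ⟨19, by norm_num, fun n pd hn hp Ω _ μ _ X k _ M hX hindep hint hM => ?_⟩
  have hι : (univ : Finset (Fin n)).Nonempty := ⟨⟨0, by omega⟩, mem_univ _⟩
  have hκ : (univ : Finset (Fin pd)).Nonempty := ⟨⟨0, by omega⟩, mem_univ _⟩
  refine maximal_inequality_of_nonneg hn hp hι hκ (A := fun i ω j => |X i ω j| ^ k)
    (fun i => measurable_pi_lambda _ fun j => ((measurable_pi_apply j).comp (hX i)).abs.pow_const k)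
    (hindep.comp (fun _ v j => |v j| ^ k) fun _ => measurable_pi_lambda _ fun j =>
      (measurable_pi_apply j).abs.pow_const k) (fun _ _ _ => by positivity) hint
    (le_of_eq_of_le (integral_congr_ae (ae_of_all _ fun ω => ?_)) hM)
  have hpow := sup'_pow_of_nonneg ⟨(⟨0, by omega⟩, ⟨0, by omega⟩), mem_univ _⟩
    (f := fun ij : Fin n × Fin pd => |X ij.1 ω ij.2|) (fun _ _ => abs_nonneg _) k
  exact (hpow.trans (sup'_univ_prod _ hι hκ _)).symm
end
end
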